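/- The map $(t^1,\dots,t^5) \mapsto (y^1,\dots,y^5)$ given by $y^1 = t^1$, $y^2 = t^2 + \frac{(t^1)^2}{4}$, $y^3 = t^3 + \frac{(t^1)^3}{108} + \frac{t^1 t^2}{6}$, $y^4 = t^4 t^5$, $y^5 = (t^5)^4$ transforms the bilinear form $\eta^{ij} = \partial g_{(5)}^{ij}/\partial y^3$ into a constant matrix, where $g_{(5)}$ is the symmetric matrix with entries $g^{11}=4y^1$, $g^{12}=8y^2$, $g^{13}=12y^3$, $g^{14}=16y^4$, $g^{15}=20y^5$, $g^{22}=4y^1y^2+12y^3$, $g^{23}=8y^1y^3+16y^4$, $g^{24}=12y^1y^4+20y^5$, $g^{25}=16y^1y^5$, $g^{33}=4y^2y^3+12y^1y^4+20y^5$, $g^{34}=8y^2y^4+16y^1y^5$, $g^{35}=12y^2y^5$, $g^{44}=4y^3y^4+12y^2y^5$, $g^{45}=8y^3y^5$, $g^{55}=4y^4y^5$. -/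

import Mathlib

/-- Partial derivative in the `i`-th coordinate direction. -/
noncomputable def pd {n : ℕ} (i : Fin n) (f : (Fin n → ℝ) → ℝ) : (Fin n → ℝ) → ℝ :=
  fun x => fderiv ℝ f x (Pi.single i 1)

/-- The explicit `B_5` orbit-space metric `g_{(5)}` in the coordinates `y^1, …, y^5`
(`y i` stands for `y^{i+1}`). -/
noncomputable def g5 (y : Fin 5 → ℝ) : Matrix (Fin 5) (Fin 5) ℝ :=
  !![4*y 0,  8*y 1,            12*y 2,                      16*y 3,                20*y 4;
     8*y 1,  4*y 0*y 1+12*y 2, 8*y 0*y 2+16*y 3,            12*y 0*y 3+20*y 4,     16*y 0*y 4;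
     12*y 2, 8*y 0*y 2+16*y 3, 4*y 1*y 2+12*y 0*y 3+20*y 4, 8*y 1*y 3+16*y 0*y 4,  12*y 1*y 4;
     16*y 3, 12*y 0*y 3+20*y 4, 8*y 1*y 3+16*y 0*y 4,       4*y 2*y 3+12*y 1*y 4,  8*y 2*y 4;
     20*y 4, 16*y 0*y 4,        12*y 1*y 4,                 8*y 2*y 4,             4*y 3*y 4]

/-- `η^{ij} = ∂g_{(5)}^{ij}/∂y^3`. -/
noncomputable def eta5 (y : Fin 5 → ℝ) : Matrix (Fin 5) (Fin 5) ℝ :=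
  fun i j => fderiv ℝ (fun z : Fin 5 → ℝ => g5 z i j) y (Pi.single 2 1)

/-- The change of coordinates `t ↦ y` of the `B_{3,5}` structure:
`y^1 = t^1`, `y^2 = t^2 + (t^1)²/4`, `y^3 = t^3 + (t^1)³/108 + t^1 t^2/6`,
`y^4 = t^4 t^5`, `y^5 = (t^5)⁴`. -/
noncomputable def phi5 (t : Fin 5 → ℝ) : Fin 5 → ℝ :=
  ![t 0, t 1 + (t 0) ^ 2 / 4, t 2 + (t 0) ^ 3 / 108 + t 0 * t 1 / 6,
    t 3 * t 4, (t 4) ^ 4]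

/-- Jacobian matrix `J_{iα} = ∂y^i/∂t^α` of `phi5`. -/
noncomputable def J5 (t : Fin 5 → ℝ) : Matrix (Fin 5) (Fin 5) ℝ :=
  fun i a => fderiv ℝ (fun s : Fin 5 → ℝ => phi5 s i) t (Pi.single a 1)

/-!
Flatness amounts to the congruence `η(φ(t)) = J c Jᵀ` with `J` the Jacobian of `φ = phi5` and `c`
a constant matrix. Both `η` (linear in `y`) and `J` are explicit polynomials, so this is a
polynomial identity in `t`. Since `det J = 4 (t⁵)⁴`, `J` is invertible off `t⁵ = 0`, and there the
pullback `J⁻¹ η J⁻ᵀ` is `c`.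
-/

open Matrix

theorem fderiv_apply_single {𝕜 ι : Type*} [NontriviallyNormedField 𝕜] [Fintype ι] [DecidableEq ι]
    (i a : ι) (y : ι → 𝕜) :
    fderiv 𝕜 (fun z : ι → 𝕜 => z i) y (Pi.single a 1) = (Pi.single a (1 : 𝕜) : ι → 𝕜) i := by
  rw [(hasFDerivAt_apply i y).fderiv]
  rfl

theorem Matrix.nonsing_inv_mul_mul_transpose_cancel {n R : Type*} [Fintype n] [DecidableEq n]
    [CommRing R] (A c : Matrix n n R) (hA : IsUnit A.det) : A⁻¹ * (A * c * Aᵀ) * A⁻¹ᵀ = c := by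
  have hAt : IsUnit Aᵀ.det := (det_transpose A).symm ▸ hA
  simp only [transpose_nonsing_inv, Matrix.mul_assoc, mul_nonsing_inv _ hAt, Matrix.mul_one,
    nonsing_inv_mul_cancel_left _ _ hA]

theorem eta5_eq (y : Fin 5 → ℝ) :
    eta5 y = !![0, 0, 12, 0, 0;
                0, 12, 8 * y 0, 0, 0;
                12, 8 * y 0, 4 * y 1, 0, 0;
                0, 0, 0, 4 * y 3, 8 * y 4;
                0, 0, 0, 8 * y 4, 0] := by
  ext i j
  fin_cases i <;> fin_cases j <;>
  simp (disch := fun_prop) [eta5, g5, fderiv_fun_add, fderiv_fun_mul, fderiv_apply_single,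
    Pi.single_apply]
  all_goals ring

theorem J5_eq (t : Fin 5 → ℝ) :
    J5 t = !![1, 0, 0, 0, 0;
              t 0 / 2, 1, 0, 0, 0;
              t 0 ^ 2 / 36 + t 1 / 6, t 0 / 6, 1, 0, 0;
              0, 0, 0, t 4, t 3;
              0, 0, 0, 0, 4 * t 4 ^ 3] := by
  ext i a
  fin_cases i <;> fin_cases a <;>
  simp (disch := fun_prop) [J5, phi5, div_eq_mul_inv, fderiv_fun_add, fderiv_fun_mul,
    fderiv_fun_pow, fderiv_apply_single, Pi.single_apply]
  all_goals ring

theorem det_J5 (t : Fin 5 → ℝ) : (J5 t).det = 4 * t 4 ^ 4 := by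
  rw [J5_eq]
  simp [det_succ_row_zero, Fin.sum_univ_succ]
  ring

def eta5Flat : Matrix (Fin 5) (Fin 5) ℝ :=
  !![0, 0, 12, 0, 0;
     0, 12, 0, 0, 0;
     12, 0, 0, 0, 0;
     0, 0, 0, 0, 2;
     0, 0, 0, 2, 0]

theorem eta5_phi5_eq (t : Fin 5 → ℝ) : eta5 (phi5 t) = J5 t * eta5Flat * (J5 t)ᵀ := by
  rw [eta5_eq, J5_eq]
  ext i j
  fin_cases i <;> fin_cases j <;>
  simp [eta5Flat, phi5, mul_apply, Fin.sum_univ_five]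
  all_goals ring

/-- The listed coordinates are flat for `η`: the pullback
`η̃^{αβ} = ∑_{i,j} (∂t^α/∂y^i)(∂t^β/∂y^j) η^{ij}` (with `∂t/∂y = J⁻¹`) is a constant
matrix on the locus `t^5 ≠ 0`. -/
theorem stmt12 :
    ∃ c : Matrix (Fin 5) (Fin 5) ℝ, ∀ t : Fin 5 → ℝ, t 4 ≠ 0 →
      (J5 t)⁻¹ * eta5 (phi5 t) * ((J5 t)⁻¹).transpose = c := by
  refine ⟨eta5Flat, fun t ht => ?_⟩
  have hdet : IsUnit (J5 t).det := by
    rw [det_J5]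
    exact (mul_ne_zero four_ne_zero (pow_ne_zero 4 ht)).isUnit
  rw [eta5_phi5_eq]
  exact nonsing_inv_mul_mul_transpose_cancel _ _ hdet
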